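/- For every ε ∈ (0,1/2), the function u_ε is supported in [ε,3/4] and satisfies ‖u_ε‖_{∼,1/2,(ε,3/4)}² ≥ log(log(1/ε)) + 4(log 2)^{1/2}/(log(1/ε))^{1/2} − (log 2)/log(1/ε) − log(log 2) − 3. In particular, ‖u_ε‖_{∼,1/2,(ε,3/4)} → ∞ as ε → 0⁺. -/

import Mathlib

open MeasureTheory Metric Set ENNReal Filter

/-- The squared half-order weighted Sobolev norm on an open set `O ⊆ ℝ` (dimension `n = 1`). -/
noncomputable def halfNormSq (O : Set ℝ) (u : ℝ → ℝ) : ℝ≥0∞ :=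
  (∫⁻ x in O, ∫⁻ y in O, ENNReal.ofReal ((u x - u y) ^ 2 / |x - y| ^ 2)) +
    ∫⁻ x in O, ENNReal.ofReal ((u x) ^ 2 / infDist x Oᶜ)

/-- The function `u_ε` from the counterexample of Ainsworth–Guo, adapted:
`u_ε(r) = (−log r)^{−1/2} − (−log ε)^{−1/2}` for `ε ≤ r < 1/2`,
`u_ε(r) = (3−4r)((log 2)^{−1/2} − (−log ε)^{−1/2})` for `1/2 ≤ r < 3/4`, and `0` otherwise. -/
noncomputable def ueps (ε : ℝ) : ℝ → ℝ := fun r =>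
  if ε ≤ r ∧ r < 1 / 2 then
    (-Real.log r) ^ (-(1 / 2) : ℝ) - (-Real.log ε) ^ (-(1 / 2) : ℝ)
  else if 1 / 2 ≤ r ∧ r < 3 / 4 then
    (3 - 4 * r) * ((Real.log 2) ^ (-(1 / 2) : ℝ) - (-Real.log ε) ^ (-(1 / 2) : ℝ))
  else 0

/-! On `(ε, 1/2)` the distance to the boundary of `(ε, 3/4)` is at most `x`, so the boundary term
alone dominates `∫_ε^{1/2} ((-log x)^{-1/2} - (-log ε)^{-1/2})² dx / x`. After the substitution
`t = -log x` this integral is elementary; it equals the stated bound, whose leading term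
`log (log (1/ε))` diverges. -/

open Topology

lemma rpow_neg_half_eq_inv_sqrt {t : ℝ} (ht : 0 ≤ t) : t ^ (-(1 / 2) : ℝ) = (√t)⁻¹ := by
  rw [Real.rpow_neg ht, Real.sqrt_eq_rpow]

lemma ueps_eq_zero_of_notMem_Ico {ε r : ℝ} (hε : ε ≤ 1 / 2) (hr : r ∉ Ico ε (3 / 4)) :
    ueps ε r = 0 := by
  rw [mem_Ico, not_and_or, not_le, not_lt] at hr
  rw [ueps, if_neg (by rintro ⟨h₁, h₂⟩; rcases hr with h | h <;> linarith),
    if_neg (by rintro ⟨h₁, h₂⟩; rcases hr with h | h <;> linarith)]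

lemma ueps_eq_of_mem_Ico {ε x : ℝ} (hε : 0 < ε) (hx : x ∈ Ico ε (1 / 2)) :
    ueps ε x = (√(-Real.log x))⁻¹ - (√(-Real.log ε))⁻¹ := by
  have hx0 : 0 < x := hε.trans_le hx.1
  have hx1 : x ≤ 1 := by linarith [hx.2]
  rw [ueps, if_pos (mem_Ico.1 hx),
    rpow_neg_half_eq_inv_sqrt (neg_nonneg.2 (Real.log_nonpos hx0.le hx1)),
    rpow_neg_half_eq_inv_sqrt (neg_nonneg.2 (Real.log_nonpos hε.le (hx.1.trans hx1)))]

lemma infDist_compl_Ioo_pos {a b x : ℝ} (hx : x ∈ Ioo a b) : 0 < infDist x (Ioo a b)ᶜ :=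
  (isOpen_Ioo.isClosed_compl.notMem_iff_infDist_pos ⟨a, by simp⟩).1 (not_not.2 hx)

lemma infDist_compl_Ioo_le_sub_left {a b x : ℝ} (hx : a ≤ x) :
    infDist x (Ioo a b)ᶜ ≤ x - a :=
  calc infDist x (Ioo a b)ᶜ ≤ dist x a := infDist_le_dist_of_mem (by simp)
    _ = x - a := by rw [Real.dist_eq, abs_of_nonneg (sub_nonneg.2 hx)]

noncomputable def logPrimitive (c x : ℝ) : ℝ :=
  -Real.log (-Real.log x) + 4 * c * √(-Real.log x) - c ^ 2 * -Real.log x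

lemma hasDerivAt_logPrimitive (c : ℝ) {x : ℝ} (hx0 : 0 < x) (hx1 : x < 1) :
    HasDerivAt (logPrimitive c) (((√(-Real.log x))⁻¹ - c) ^ 2 / x) x := by
  have ht : 0 < -Real.log x := neg_pos.2 (Real.log_neg hx0 hx1)
  have hneg : HasDerivAt (fun y => -Real.log y) (-x⁻¹) x := (Real.hasDerivAt_log hx0.ne').neg
  have h := (((Real.hasDerivAt_log ht.ne').comp x hneg).neg.add
    (((Real.hasDerivAt_sqrt ht.ne').comp x hneg).const_mul (4 * c))).sub
    (hneg.const_mul (c ^ 2))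
  refine h.congr_deriv ?_
  obtain ⟨s, hs, hts⟩ : ∃ s, 0 < s ∧ -Real.log x = s ^ 2 :=
    ⟨√(-Real.log x), Real.sqrt_pos.2 ht, (Real.sq_sqrt ht.le).symm⟩
  rw [hts, Real.sqrt_sq hs.le]
  field_simp
  ring

lemma integrableOn_and_integral_eq_logPrimitive_sub {a b c : ℝ} (ha : 0 < a) (hab : a ≤ b)
    (hb : b < 1) :
    IntegrableOn (fun x => ((√(-Real.log x))⁻¹ - c) ^ 2 / x) (Ioo a b) ∧
      ∫ x in Ioo a b, ((√(-Real.log x))⁻¹ - c) ^ 2 / x =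
        logPrimitive c b - logPrimitive c a := by
  have hderiv : ∀ x ∈ Icc a b,
      HasDerivAt (logPrimitive c) (((√(-Real.log x))⁻¹ - c) ^ 2 / x) x :=
    fun x hx => hasDerivAt_logPrimitive c (ha.trans_le hx.1) (hx.2.trans_lt hb)
  have hcont : ContinuousOn (logPrimitive c) (Icc a b) :=
    fun x hx => (hderiv x hx).continuousAt.continuousWithinAt
  have hint := intervalIntegral.integrableOn_deriv_of_nonneg hcont
    (fun x hx => hderiv x (Ioo_subset_Icc_self hx))
    fun x hx => div_nonneg (sq_nonneg _) (ha.trans hx.1).le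
  refine ⟨hint.mono_set Ioo_subset_Ioc_self, ?_⟩
  rw [← integral_Ioc_eq_integral_Ioo, ← intervalIntegral.integral_of_le hab]
  exact intervalIntegral.integral_eq_sub_of_hasDerivAt_of_le hab hcont
    (fun x hx => hderiv x (Ioo_subset_Icc_self hx))
    ((intervalIntegrable_iff_integrableOn_Ioc_of_le hab).2 hint)

noncomputable def halfNormLowerBound (L : ℝ) : ℝ :=
  Real.log L + 4 * √(Real.log 2) / √L - Real.log 2 / L - Real.log (Real.log 2) - 3

lemma logPrimitive_half_sub_logPrimitive {ε : ℝ} (hε0 : 0 < ε) (hε1 : ε < 1) :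
    logPrimitive (√(-Real.log ε))⁻¹ (1 / 2) - logPrimitive (√(-Real.log ε))⁻¹ ε =
      halfNormLowerBound (-Real.log ε) := by
  have hL : 0 < -Real.log ε := neg_pos.2 (Real.log_neg hε0 hε1)
  rw [logPrimitive, logPrimitive, halfNormLowerBound, one_div, Real.log_inv, neg_neg, inv_pow,
    Real.sq_sqrt hL.le]
  generalize -Real.log ε = L at hL ⊢
  field_simp
  ring

lemma ofReal_halfNormLowerBound_le_halfNormSq {ε : ℝ} (hε0 : 0 < ε) (hε : ε < 1 / 2) :
    ENNReal.ofReal (halfNormLowerBound (Real.log (1 / ε))) ≤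
      halfNormSq (Ioo ε (3 / 4)) (ueps ε) := by
  set g : ℝ → ℝ := fun x => ((√(-Real.log x))⁻¹ - (√(-Real.log ε))⁻¹) ^ 2 / x
  obtain ⟨hint, hg⟩ := integrableOn_and_integral_eq_logPrimitive_sub
    (c := (√(-Real.log ε))⁻¹) hε0 hε.le (by norm_num : (1 / 2 : ℝ) < 1)
  have hd : ∀ x ∈ Ioo ε (1 / 2), g x ≤ ueps ε x ^ 2 / infDist x (Ioo ε (3 / 4))ᶜ := by
    intro x hx
    rw [ueps_eq_of_mem_Ico hε0 (Ioo_subset_Ico_self hx)]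
    exact div_le_div_of_nonneg_left (sq_nonneg _)
      (infDist_compl_Ioo_pos ⟨hx.1, hx.2.trans (by norm_num)⟩)
      ((infDist_compl_Ioo_le_sub_left hx.1.le).trans (sub_le_self _ hε0.le))
  calc ENNReal.ofReal (halfNormLowerBound (Real.log (1 / ε)))
      = ENNReal.ofReal (∫ x in Ioo ε (1 / 2), g x) := by
        rw [hg, logPrimitive_half_sub_logPrimitive hε0 (by linarith), one_div, Real.log_inv]
    _ = ∫⁻ x in Ioo ε (1 / 2), ENNReal.ofReal (g x) :=
        ofReal_integral_eq_lintegral_ofReal hint <| (ae_restrict_mem measurableSet_Ioo).mono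
          fun x hx => div_nonneg (sq_nonneg _) (hε0.trans hx.1).le
    _ ≤ ∫⁻ x in Ioo ε (1 / 2), ENNReal.ofReal (ueps ε x ^ 2 / infDist x (Ioo ε (3 / 4))ᶜ) :=
        setLIntegral_mono' measurableSet_Ioo fun x hx => ENNReal.ofReal_le_ofReal (hd x hx)
    _ ≤ ∫⁻ x in Ioo ε (3 / 4), ENNReal.ofReal (ueps ε x ^ 2 / infDist x (Ioo ε (3 / 4))ᶜ) :=
        lintegral_mono_set (Ioo_subset_Ioo_right (by norm_num))
    _ ≤ halfNormSq (Ioo ε (3 / 4)) (ueps ε) := le_add_self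

lemma tendsto_halfNormLowerBound_atTop : Tendsto halfNormLowerBound atTop atTop := by
  have hrest : Tendsto
      (fun L => 4 * √(Real.log 2) / √L - Real.log 2 / L - Real.log (Real.log 2) - 3)
      atTop (𝓝 (0 - 0 - Real.log (Real.log 2) - 3)) :=
    (((tendsto_const_nhds.div_atTop Real.tendsto_sqrt_atTop).sub
      (tendsto_const_nhds.div_atTop tendsto_id)).sub
      tendsto_const_nhds).sub tendsto_const_nhds
  exact (Real.tendsto_log_atTop.atTop_add hrest).congr fun L => by
    simp only [halfNormLowerBound]; ring

/-- `u_ε` is supported in `[ε, 3/4]`, its squared half-norm on `(ε, 3/4)` is bounded below by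
`log(log(1/ε)) + 4√(log 2)/√(log(1/ε)) − log 2/log(1/ε) − log(log 2) − 3`, and in particular
`‖u_ε‖_{∼,1/2,(ε,3/4)} → ∞` as `ε → 0⁺`. -/
theorem halfNormSq_ueps_blows_up :
    (∀ ε ∈ Ioo (0 : ℝ) (1 / 2), ∀ r, r ∉ Icc ε (3 / 4) → ueps ε r = 0) ∧
    (∀ ε ∈ Ioo (0 : ℝ) (1 / 2),
      ENNReal.ofReal (Real.log (Real.log (1 / ε)) +
          4 * Real.sqrt (Real.log 2) / Real.sqrt (Real.log (1 / ε)) -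
          Real.log 2 / Real.log (1 / ε) - Real.log (Real.log 2) - 3) ≤
        halfNormSq (Ioo ε (3 / 4)) (ueps ε)) ∧
    Tendsto (fun ε => halfNormSq (Ioo ε (3 / 4)) (ueps ε)) (nhdsWithin 0 (Ioi 0)) (nhds ⊤) := by
  refine ⟨fun ε hε r hr => ueps_eq_zero_of_notMem_Ico hε.2.le fun h => hr (Ico_subset_Icc_self h),
    fun ε hε => ofReal_halfNormLowerBound_le_halfNormSq hε.1 hε.2, ?_⟩
  have hlog : Tendsto (fun ε : ℝ => Real.log (1 / ε)) (𝓝[>] 0) atTop := by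
    simpa only [one_div, Function.comp_def] using
      Real.tendsto_log_atTop.comp tendsto_inv_nhdsGT_zero
  refine tendsto_nhds_top_mono
    (ENNReal.tendsto_ofReal_atTop.comp (tendsto_halfNormLowerBound_atTop.comp hlog)) ?_
  filter_upwards [Ioo_mem_nhdsGT (by norm_num : (0 : ℝ) < 1 / 2)] with ε hε
  exact ofReal_halfNormLowerBound_le_halfNormSq hε.1 hε.2
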